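/- There are no elements x, y, z of the field ℚ_43 of 43-adic numbers with (x, y, z) ≠ (0, 0, 0) such that 3x^7 + 4y^7 + 5z^7 = 0. -/

import Mathlib

instance : Fact (Nat.Prime 43) := ⟨by norm_num⟩

/-! If a diagonal ternary form has only the trivial zero modulo `p`, it has only the trivial zero
over `ℚ_[p]`: dividing a nonzero solution by its coordinate of largest norm gives an integral
solution with a unit coordinate, whose reduction modulo `p` is nontrivial. Modulo `43`, the
seventh powers are `0` and the sixth roots of unity (as `43 - 1 = 6 * 7`), and a finite check shows
that `3 u + 4 v + 5 w` never vanishes for nonzero such `u, v, w`. -/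

namespace PadicInt

variable {p : ℕ} [Fact p.Prime]

theorem toZMod_eq_zero_iff_norm_lt_one {x : ℤ_[p]} : toZMod x = 0 ↔ ‖x‖ < 1 := by
  rw [← RingHom.mem_ker, ker_toZMod, IsLocalRing.mem_maximalIdeal, mem_nonunits]

theorem norm_lt_one_of_diagonal_form_eq_zero {n : ℕ} {a b c : ℤ}
    (hmod : ∀ u v w : ZMod p, a * u ^ n + b * v ^ n + c * w ^ n = 0 → u = 0 ∧ v = 0 ∧ w = 0)
    {x y z : ℤ_[p]} (h : a * x ^ n + b * y ^ n + c * z ^ n = 0) :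
    ‖x‖ < 1 ∧ ‖y‖ < 1 ∧ ‖z‖ < 1 := by
  have hred := congrArg toZMod h
  simp only [map_add, map_mul, map_pow, map_intCast, map_zero] at hred
  simpa only [toZMod_eq_zero_iff_norm_lt_one] using hmod _ _ _ hred

end PadicInt

namespace Padic

variable {p : ℕ} [Fact p.Prime]

theorem eq_zero_of_diagonal_form_eq_zero {n : ℕ} {a b c : ℤ}
    (hmod : ∀ u v w : ZMod p, a * u ^ n + b * v ^ n + c * w ^ n = 0 → u = 0 ∧ v = 0 ∧ w = 0)
    {x y z : ℚ_[p]} (h : a * x ^ n + b * y ^ n + c * z ^ n = 0) :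
    x = 0 ∧ y = 0 ∧ z = 0 := by
  classical
  by_contra hne
  obtain ⟨t, ht, ht_max⟩ := Finset.exists_max_image {x, y, z} norm (Finset.insert_nonempty _ _)
  simp only [Finset.mem_insert, Finset.mem_singleton, forall_eq_or_imp, forall_eq] at ht ht_max
  obtain ⟨hxt, hyt, hzt⟩ := ht_max
  have ht0 : t ≠ 0 := by
    rintro rfl
    simp only [norm_zero, norm_le_zero_iff] at hxt hyt hzt
    exact hne ⟨hxt, hyt, hzt⟩
  have hle {s : ℚ_[p]} (hs : ‖s‖ ≤ ‖t‖) : ‖s / t‖ ≤ 1 := by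
    rw [norm_div]
    exact div_le_one_of_le₀ hs (norm_nonneg t)
  have hscaled : a * (x / t) ^ n + b * (y / t) ^ n + c * (z / t) ^ n = 0 := by
    simp only [div_pow, mul_div_assoc', ← add_div, h, zero_div]
  obtain ⟨hx, hy, hz⟩ := PadicInt.norm_lt_one_of_diagonal_form_eq_zero hmod
    (x := ⟨x / t, hle hxt⟩) (y := ⟨y / t, hle hyt⟩) (z := ⟨z / t, hle hzt⟩)
    (Subtype.ext (by push_cast; exact hscaled))
  have h_not_lt : ¬ ‖t / t‖ < 1 := by rw [div_self ht0, norm_one]; exact lt_irrefl 1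
  rcases ht with rfl | rfl | rfl
  exacts [h_not_lt hx, h_not_lt hy, h_not_lt hz]

end Padic

def seventhPowersMod43 : Finset (ZMod 43) := {0, 1, 6, 7, 36, 37, 42}

theorem pow_seven_mem_seventhPowersMod43 (u : ZMod 43) : u ^ 7 ∈ seventhPowersMod43 := by
  decide +revert

set_option maxRecDepth 4000 in
theorem eq_zero_of_mem_seventhPowersMod43 :
    ∀ u ∈ seventhPowersMod43, ∀ v ∈ seventhPowersMod43, ∀ w ∈ seventhPowersMod43,
      3 * u + 4 * v + 5 * w = 0 → u = 0 ∧ v = 0 ∧ w = 0 := by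
  decide

theorem ZMod.eq_zero_of_three_mul_pow_seven_add_four_mul_pow_seven_add_five_mul_pow_seven
    (u v w : ZMod 43) (h : 3 * u ^ 7 + 4 * v ^ 7 + 5 * w ^ 7 = 0) : u = 0 ∧ v = 0 ∧ w = 0 := by
  obtain ⟨hu, hv, hw⟩ := eq_zero_of_mem_seventhPowersMod43 _ (pow_seven_mem_seventhPowersMod43 u)
    _ (pow_seven_mem_seventhPowersMod43 v) _ (pow_seven_mem_seventhPowersMod43 w) h
  exact ⟨eq_zero_of_pow_eq_zero hu, eq_zero_of_pow_eq_zero hv, eq_zero_of_pow_eq_zero hw⟩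

theorem no_Q43_points_3_4_5 :
    ¬ ∃ x y z : ℚ_[43], (x, y, z) ≠ (0, 0, 0) ∧
      3 * x ^ 7 + 4 * y ^ 7 + 5 * z ^ 7 = 0 := by
  rintro ⟨x, y, z, hne, h⟩
  have hmod (u v w : ZMod 43) (huvw : (3 : ℤ) * u ^ 7 + (4 : ℤ) * v ^ 7 + (5 : ℤ) * w ^ 7 = 0) :
      u = 0 ∧ v = 0 ∧ w = 0 :=
    ZMod.eq_zero_of_three_mul_pow_seven_add_four_mul_pow_seven_add_five_mul_pow_seven u v w
      (by exact_mod_cast huvw)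
  obtain ⟨rfl, rfl, rfl⟩ := Padic.eq_zero_of_diagonal_form_eq_zero hmod (by exact_mod_cast h)
  exact hne rfl
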